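/- arXiv:2508.11650 — 10 statements merged into one kernel-verified Lean document; each statement's English description precedes it below -/
import Mathlib

section
/- For every natural number n ≥ 0, the generalized Gaussian third-order Jacobsthal number satisfies the Binet formula Jg(n) = (1/7)·[ (a+b+c)·(1 + i/2)·2^n + (4a+4b-3c + (2a-5b+2c)·i)·Ω(n) + (6a-b-c - (4a+4b-3c)·i)·Ω(n+1) ]. -/
/-!
The characteristic polynomial `x³ - x² - x - 2` of the Jacobsthal recurrence factors as
`(x - 2)(x² + x + 1)`. The sequence `2ⁿ` belongs to the root `2`, while `Ω(n)` and `Ω(n + 1)` are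
integer-valued solutions belonging to the primitive cube roots of unity, since
`Ω(n + 2) + Ω(n + 1) + Ω(n) = 0`. So the right-hand side solves the recurrence, and it suffices
to compare it with `Jg` at `n = 0, 1, 2`.
-/

/-- Ω(n) = 0, 1, -1 according as n ≡ 0, 1, 2 (mod 3). -/
def Omg (n : ℕ) : ℤ := if n % 3 = 0 then 0 else if n % 3 = 1 then 1 else -1

lemma Omg_add_three (n : ℕ) : Omg (n + 3) = Omg n := by
  simp [Omg]

lemma Omg_add_two (n : ℕ) : Omg (n + 2) = -Omg n - Omg (n + 1) := by
  have h : n % 3 = 0 ∨ n % 3 = 1 ∨ n % 3 = 2 := by omega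
  rcases h with h | h | h <;> simp [Omg, Nat.add_mod, h]

namespace LinearRecurrence

section CommSemiring

variable {R : Type*} [CommSemiring R]

lemma IsSolution.comp_succ {E : LinearRecurrence R} {u : ℕ → R} (hu : E.IsSolution u) :
    E.IsSolution fun n ↦ u (n + 1) := fun n ↦ by
  simpa only [add_right_comm] using hu (n + 1)

variable (R) in
def jacobsthal : LinearRecurrence R := ⟨3, ![2, 1, 1]⟩

lemma isSolution_jacobsthal_iff {u : ℕ → R} :
    (jacobsthal R).IsSolution u ↔ ∀ n, u (n + 3) = u (n + 2) + u (n + 1) + 2 * u n := by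
  change (∀ n, u (n + 3) = ∑ i : Fin 3, ![2, 1, 1] i * u (n + i)) ↔ _
  refine forall_congr' fun n ↦ ?_
  simp [Fin.sum_univ_three, add_comm, add_assoc]

lemma isSolution_jacobsthal_two_pow : (jacobsthal R).IsSolution fun n ↦ (2 : R) ^ n :=
  isSolution_jacobsthal_iff.2 fun n ↦ by ring

end CommSemiring

section CommRing

variable {R : Type*} [CommRing R]

lemma isSolution_jacobsthal_Omg : (jacobsthal R).IsSolution fun n ↦ (Omg n : R) :=
  isSolution_jacobsthal_iff.2 fun n ↦ by
    rw [Omg_add_three, Omg_add_two]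
    push_cast
    ring

lemma isSolution_jacobsthal_binet (A B C : R) :
    (jacobsthal R).IsSolution fun n ↦ A * 2 ^ n + B * (Omg n : R) + C * (Omg (n + 1) : R) := by
  have hpow := (is_sol_iff_mem_solSpace _ _).1 (isSolution_jacobsthal_two_pow (R := R))
  have hOmg := (is_sol_iff_mem_solSpace _ _).1 (isSolution_jacobsthal_Omg (R := R))
  have hOmg_succ := (is_sol_iff_mem_solSpace _ _).1 (isSolution_jacobsthal_Omg (R := R)).comp_succ
  rw [is_sol_iff_mem_solSpace]
  exact add_mem (add_mem (Submodule.smul_mem _ A hpow) (Submodule.smul_mem _ B hOmg))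
    (Submodule.smul_mem _ C hOmg_succ)

end CommRing

end LinearRecurrence

open LinearRecurrence

theorem binet_generalized_gaussian_third_order_jacobsthal
    (a b c : ℝ) (Jg : ℕ → ℂ)
    (h0 : Jg 0 = (a : ℂ) + ((c - b - a) / 2 : ℝ) * Complex.I)
    (h1 : Jg 1 = (b : ℂ) + (a : ℝ) * Complex.I)
    (h2 : Jg 2 = (c : ℂ) + (b : ℝ) * Complex.I)
    (hrec : ∀ n : ℕ, Jg (n + 3) = Jg (n + 2) + Jg (n + 1) + 2 * Jg n) :
    ∀ n : ℕ,
      Jg n = (1 / 7 : ℂ) *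
        (((a : ℂ) + b + c) * (1 + Complex.I / 2) * 2 ^ n
          + ((4 * a + 4 * b - 3 * c : ℝ) + (2 * a - 5 * b + 2 * c : ℝ) * Complex.I) * (Omg n : ℂ)
          + ((6 * a - b - c : ℝ) - (4 * a + 4 * b - 3 * c : ℝ) * Complex.I) * (Omg (n + 1) : ℂ)) := by
  have hbinet := isSolution_jacobsthal_binet (R := ℂ)
    ((a + b + c) * (1 + Complex.I / 2) / 7)
    (((4 * a + 4 * b - 3 * c : ℝ) + (2 * a - 5 * b + 2 * c : ℝ) * Complex.I) / 7)
    (((6 * a - b - c : ℝ) - (4 * a + 4 * b - 3 * c : ℝ) * Complex.I) / 7)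
  refine congrFun <| (eq_iff_eqOn_range_order _ _ _ (isSolution_jacobsthal_iff.2 hrec)
    (by ring_nf at hbinet ⊢; exact hbinet)).2 fun n hn ↦ ?_
  obtain rfl | rfl | rfl : n = 0 ∨ n = 1 ∨ n = 2 := by simp [jacobsthal] at hn; omega
  all_goals simp only [h0, h1, h2]; norm_num [Omg]; ring
end

section
/- For every natural number n ≥ 0, Jg(n+3) = Jg(n) + (a+b+c)·(1 + i/2)·2^n. -/
/-! The sum of three consecutive terms of the third-order Jacobsthal recurrence doubles at each
step, since `f (n+3) + f (n+2) + f (n+1) = 2 * (f (n+2) + f (n+1) + f n)`. As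
`f (n+3) - f n` is exactly such a sum, it equals `2 ^ n * (f 2 + f 1 + f 0)`, and the initial
values make `f 2 + f 1 + f 0 = (a + b + c) * (1 + i / 2)`. -/

section ThirdOrderJacobsthal

variable {R : Type*} [CommSemiring R] {f : ℕ → R}

theorem sum_three_consecutive_eq_two_pow_mul
    (hrec : ∀ n, f (n + 3) = f (n + 2) + f (n + 1) + 2 * f n) (n : ℕ) :
    f (n + 2) + f (n + 1) + f n = 2 ^ n * (f 2 + f 1 + f 0) := by
  induction n with
  | zero => simp
  | succ n ih =>
    calc f (n + 3) + f (n + 2) + f (n + 1) = 2 * (f (n + 2) + f (n + 1) + f n) := by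
          rw [hrec]; ring
      _ = 2 ^ (n + 1) * (f 2 + f 1 + f 0) := by rw [ih, pow_succ']; ring

theorem add_three_eq_add_two_pow_mul
    (hrec : ∀ n, f (n + 3) = f (n + 2) + f (n + 1) + 2 * f n) (n : ℕ) :
    f (n + 3) = f n + 2 ^ n * (f 2 + f 1 + f 0) := by
  rw [← sum_three_consecutive_eq_two_pow_mul hrec, hrec]; ring

end ThirdOrderJacobsthal

theorem generalized_gaussian_third_order_jacobsthal_shift_three
    (a b c : ℝ) (Jg : ℕ → ℂ)
    (h0 : Jg 0 = (a : ℂ) + ((c - b - a) / 2 : ℝ) * Complex.I)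
    (h1 : Jg 1 = (b : ℂ) + (a : ℝ) * Complex.I)
    (h2 : Jg 2 = (c : ℂ) + (b : ℝ) * Complex.I)
    (hrec : ∀ n : ℕ, Jg (n + 3) = Jg (n + 2) + Jg (n + 1) + 2 * Jg n) :
    ∀ n : ℕ, Jg (n + 3) = Jg n + ((a : ℂ) + b + c) * (1 + Complex.I / 2) * 2 ^ n := by
  have initial_sum : Jg 2 + Jg 1 + Jg 0 = ((a : ℂ) + b + c) * (1 + Complex.I / 2) := by
    rw [h0, h1, h2]; push_cast; ring
  intro n
  rw [add_three_eq_add_two_pow_mul hrec, initial_sum, mul_comm (2 ^ n : ℂ)]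
end

section
/- For every natural number n ≥ 1, the generalized Gaussian third-order Jacobsthal number with negative subscript satisfies Jg(-n) = (1/7)·[ (a+b+c)·(1 + i/2)·(1/2)^n - (4a+4b-3c + (2a-5b+2c)·i)·Ω(n) - (6a-b-c - (4a+4b-3c)·i)·Ω(n-1) ]. -/
/-!
Read backwards, the recurrence becomes `2 x(n+3) = x(n) - x(n+1) - x(n+2)` for `x(n) = Jg(-n)`,
whose characteristic polynomial `2t³ + t² + t - 1 = (2t - 1)(t² + t + 1)` has the roots `1/2` and
the primitive cube roots of unity. Hence `(1/2)^n` and every shift of the 3-periodic sequence `Ω`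
solve it, so does the right-hand side of the formula, and two solutions agreeing at
`n = 0, 1, 2` coincide.
-/

/-- Ω(n) = 0, 1, -1 according as n ≡ 0, 1, 2 (mod 3), for integer n. -/
def OmgZ (n : ℤ) : ℤ := if n % 3 = 0 then 0 else if n % 3 = 1 then 1 else -1

open LinearRecurrence

noncomputable def backwardJacobsthal : LinearRecurrence ℂ := ⟨3, ![1 / 2, -1 / 2, -1 / 2]⟩

lemma isSolution_backwardJacobsthal_iff (u : ℕ → ℂ) :
    backwardJacobsthal.IsSolution u ↔ ∀ n, 2 * u (n + 3) = u n - u (n + 1) - u (n + 2) := by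
  refine forall_congr' fun n ↦ ?_
  change u (n + 3) = ∑ i : Fin 3, ![1 / 2, -1 / 2, -1 / 2] i * u (n + i) ↔ _
  simp only [Fin.sum_univ_three, Matrix.cons_val, Fin.val_zero, Fin.val_one, Fin.val_two,
    add_zero]
  constructor
  · intro h; linear_combination 2 * h
  · intro h; linear_combination h / 2

lemma isSolution_neg_of_recurrence {J : ℤ → ℂ}
    (hrec : ∀ n : ℤ, J (n + 3) = J (n + 2) + J (n + 1) + 2 * J n) :
    backwardJacobsthal.IsSolution fun n : ℕ ↦ J (-n) := by
  refine (isSolution_backwardJacobsthal_iff _).2 fun n ↦ ?_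
  have h := hrec (-(n + 3 : ℕ))
  push_cast at h ⊢
  ring_nf at h ⊢
  linear_combination -h

lemma isSolution_half_pow : backwardJacobsthal.IsSolution fun n : ℕ ↦ (1 / 2 : ℂ) ^ n :=
  (isSolution_backwardJacobsthal_iff _).2 fun n ↦ by ring

lemma two_mul_OmgZ_add_three (m : ℤ) :
    2 * OmgZ (m + 3) = OmgZ m - OmgZ (m + 1) - OmgZ (m + 2) := by
  unfold OmgZ
  split_ifs <;> omega

lemma isSolution_OmgZ_add (k : ℤ) :
    backwardJacobsthal.IsSolution fun n : ℕ ↦ (OmgZ (n + k) : ℂ) := by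
  refine (isSolution_backwardJacobsthal_iff _).2 fun n ↦ ?_
  have h := two_mul_OmgZ_add_three (n + k)
  push_cast
  rw [add_right_comm _ 3 k, add_right_comm _ 1 k, add_right_comm _ 2 k]
  exact_mod_cast h

noncomputable def negBinet (a b c : ℝ) (n : ℕ) : ℂ :=
  (1 / 7 : ℂ) *
    (((a : ℂ) + b + c) * (1 + Complex.I / 2) * (1 / 2 : ℂ) ^ n
      - ((4 * a + 4 * b - 3 * c : ℝ) + (2 * a - 5 * b + 2 * c : ℝ) * Complex.I)
        * (OmgZ (n : ℤ) : ℂ)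
      - ((6 * a - b - c : ℝ) - (4 * a + 4 * b - 3 * c : ℝ) * Complex.I)
        * (OmgZ ((n : ℤ) - 1) : ℂ))

lemma isSolution_negBinet (a b c : ℝ) : backwardJacobsthal.IsSolution (negBinet a b c) := by
  have hHalf := (is_sol_iff_mem_solSpace _ _).1 isSolution_half_pow
  have hOmega := (is_sol_iff_mem_solSpace _ _).1 (isSolution_OmgZ_add 0)
  have hOmegaPred := (is_sol_iff_mem_solSpace _ _).1 (isSolution_OmgZ_add (-1))
  rw [is_sol_iff_mem_solSpace]
  convert Submodule.smul_mem _ (1 / 7) <| sub_mem (sub_mem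
    (Submodule.smul_mem _ ((a + b + c) * (1 + Complex.I / 2)) hHalf)
    (Submodule.smul_mem _
      ((4 * a + 4 * b - 3 * c : ℝ) + (2 * a - 5 * b + 2 * c : ℝ) * Complex.I) hOmega))
    (Submodule.smul_mem _
      ((6 * a - b - c : ℝ) - (4 * a + 4 * b - 3 * c : ℝ) * Complex.I) hOmegaPred) using 1
  funext n
  simp [negBinet, sub_eq_add_neg]

theorem binet_negative_generalized_gaussian_third_order_jacobsthal
    (a b c : ℝ) (Jg : ℤ → ℂ)
    (h0 : Jg 0 = (a : ℂ) + ((c - b - a) / 2 : ℝ) * Complex.I)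
    (h1 : Jg 1 = (b : ℂ) + (a : ℝ) * Complex.I)
    (h2 : Jg 2 = (c : ℂ) + (b : ℝ) * Complex.I)
    (hrec : ∀ n : ℤ, Jg (n + 3) = Jg (n + 2) + Jg (n + 1) + 2 * Jg n) :
    ∀ n : ℕ, 1 ≤ n →
      Jg (-(n : ℤ)) = (1 / 7 : ℂ) *
        (((a : ℂ) + b + c) * (1 + Complex.I / 2) * (1 / 2 : ℂ) ^ n
          - ((4 * a + 4 * b - 3 * c : ℝ) + (2 * a - 5 * b + 2 * c : ℝ) * Complex.I)
            * (OmgZ (n : ℤ) : ℂ)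
          - ((6 * a - b - c : ℝ) - (4 * a + 4 * b - 3 * c : ℝ) * Complex.I)
            * (OmgZ ((n : ℤ) - 1) : ℂ)) := by
  have hm1 : Jg 2 = Jg 1 + Jg 0 + 2 * Jg (-1) := by simpa using hrec (-1)
  have hm2 : Jg 1 = Jg 0 + Jg (-1) + 2 * Jg (-2) := by simpa using hrec (-2)
  push_cast at h0
  have hinit : Set.EqOn (fun m : ℕ ↦ Jg (-m)) (negBinet a b c) ↑(Finset.range 3) := by
    intro m hm
    simp only [Finset.coe_range, Set.mem_Iio] at hm
    interval_cases m
    · norm_num [negBinet, OmgZ]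
      linear_combination h0
    · norm_num [negBinet, OmgZ]
      linear_combination (h2 - h1 - h0 - hm1) / 2
    · norm_num [negBinet, OmgZ]
      linear_combination (h1 - h0 - hm2) / 2 - (h2 - h1 - h0 - hm1) / 4
  intro n _
  exact congrFun ((eq_iff_eqOn_range_order _ _ _ (isSolution_neg_of_recurrence hrec)
    (isSolution_negBinet a b c)).2 hinit) n
end

section
/- (d'Ocagne's identity) For all natural numbers n and m with n ≥ m, Jg(m+1)·Jg(n) - Jg(m)·Jg(n+1) = (1/49)·[ (λ₁² - λ₁·λ₂ + λ₂²)·Ω(n-m) + λ·(1 + i/2)·(2^m·Ψ(n) - 2^n·Ψ(m)) ], where λ = a+b+c, λ₁ = 4a+4b-3c + (2a-5b+2c)·i, λ₂ = 6a-b-c - (4a+4b-3c)·i, and Ψ(n) = (2λ₁+λ₂)·Ω(n) + (3λ₂-λ₁)·Ω(n+1). -/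
/-!
The characteristic polynomial of the recurrence is `x³ - x² - x - 2 = (x - 2)(x² + x + 1)`, so
`Jg n = A·2ⁿ + u n` with `A = λ(1 + i/2)/7` and `u n = (λ₁ Ω(n) + λ₂ Ω(n+1))/7`, where
`u n + u (n+1) + u (n+2) = 0`. Substituting, the `A²` terms cancel, the mixed terms give the `Ψ` part,
and the periodic part is the Casoratian `u (m+1) u n - u m u (n+1)`, which for such a three-term
zero-sum sequence depends only on `n - m` and evaluates to `(λ₁² - λ₁λ₂ + λ₂²) Ω(n - m) / 49`.
-/

theorem eq_of_jacobsthal_rec_of_eq_init {R : Type*} [Semiring R] {f g : ℕ → R}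
    (hf : ∀ n, f (n + 3) = f (n + 2) + f (n + 1) + 2 * f n)
    (hg : ∀ n, g (n + 3) = g (n + 2) + g (n + 1) + 2 * g n)
    (h0 : f 0 = g 0) (h1 : f 1 = g 1) (h2 : f 2 = g 2) : ∀ n, f n = g n
  | 0 => h0
  | 1 => h1
  | 2 => h2
  | n + 3 => by
    rw [hf, hg, eq_of_jacobsthal_rec_of_eq_init hf hg h0 h1 h2 (n + 2),
      eq_of_jacobsthal_rec_of_eq_init hf hg h0 h1 h2 (n + 1),
      eq_of_jacobsthal_rec_of_eq_init hf hg h0 h1 h2 n]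

section Casoratian

variable {R : Type*} [CommRing R]

def casoratian (f : ℕ → R) (m n : ℕ) : R := f (m + 1) * f n - f m * f (n + 1)

theorem casoratian_two_pow_add (A : R) (u : ℕ → R) (m n : ℕ) :
    casoratian (fun k => A * 2 ^ k + u k) m n
      = casoratian u m n + A * (2 ^ m * (2 * u n - u (n + 1)) - 2 ^ n * (2 * u m - u (m + 1))) := by
  simp only [casoratian]
  ring

variable {f : ℕ → R} (hf : ∀ n, f n + f (n + 1) + f (n + 2) = 0)
include hf

theorem jacobsthal_rec_of_add_add_eq_zero (n : ℕ) :
    f (n + 3) = f (n + 2) + f (n + 1) + 2 * f n := by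
  linear_combination hf (n + 1) - 2 * hf n

theorem casoratian_succ_succ (m n : ℕ) : casoratian f (m + 1) (n + 1) = casoratian f m n := by
  simp only [casoratian]
  linear_combination f (n + 1) * hf m - f (m + 1) * hf n

theorem casoratian_add_left (m k : ℕ) : casoratian f m (m + k) = casoratian f 0 k := by
  induction m with
  | zero => rw [Nat.zero_add]
  | succ m ih => rw [Nat.add_right_comm, casoratian_succ_succ hf, ih]

end Casoratian

theorem Omg_add_Omg_add_one_add_Omg_add_two {R : Type*} [Ring R] (n : ℕ) :
    (Omg n : R) + Omg (n + 1) + Omg (n + 2) = 0 := by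
  have : n % 3 = 0 ∨ n % 3 = 1 ∨ n % 3 = 2 := by omega
  rcases this with h | h | h <;> simp [Omg, Nat.add_mod, h]

section OmgCombination

variable {R : Type*} [CommRing R] (x y : R)

def omgComb (n : ℕ) : R := x * Omg n + y * Omg (n + 1)

theorem omgComb_add_add_eq_zero (n : ℕ) :
    omgComb x y n + omgComb x y (n + 1) + omgComb x y (n + 2) = 0 := by
  simp only [omgComb, add_assoc, Nat.reduceAdd]
  linear_combination x * Omg_add_Omg_add_one_add_Omg_add_two (R := R) n
    + y * Omg_add_Omg_add_one_add_Omg_add_two (R := R) (n + 1)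

theorem casoratian_omgComb {m n : ℕ} (hmn : m ≤ n) :
    casoratian (omgComb x y) m n = (x ^ 2 - x * y + y ^ 2) * Omg (n - m) := by
  obtain ⟨k, rfl⟩ := Nat.exists_eq_add_of_le hmn
  rw [casoratian_add_left (omgComb_add_add_eq_zero x y), Nat.add_sub_cancel_left]
  simp only [casoratian, omgComb, zero_add, add_assoc, Nat.reduceAdd, show Omg 0 = 0 from rfl,
    show Omg 1 = 1 from rfl, show Omg 2 = -1 from rfl]
  push_cast
  linear_combination -y ^ 2 * Omg_add_Omg_add_one_add_Omg_add_two (R := R) k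

end OmgCombination

theorem docagne_generalized_gaussian_third_order_jacobsthal
    (a b c : ℝ) (Jg : ℕ → ℂ)
    (h0 : Jg 0 = (a : ℂ) + ((c - b - a) / 2 : ℝ) * Complex.I)
    (h1 : Jg 1 = (b : ℂ) + (a : ℝ) * Complex.I)
    (h2 : Jg 2 = (c : ℂ) + (b : ℝ) * Complex.I)
    (hrec : ∀ n : ℕ, Jg (n + 3) = Jg (n + 2) + Jg (n + 1) + 2 * Jg n)
    (lam lam1 lam2 : ℂ) (Psi : ℕ → ℂ)
    (hlam : lam = (a : ℂ) + b + c)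
    (hlam1 : lam1 = (4 * a + 4 * b - 3 * c : ℝ) + (2 * a - 5 * b + 2 * c : ℝ) * Complex.I)
    (hlam2 : lam2 = (6 * a - b - c : ℝ) - (4 * a + 4 * b - 3 * c : ℝ) * Complex.I)
    (hPsi : ∀ n : ℕ, Psi n = (2 * lam1 + lam2) * (Omg n : ℂ) + (3 * lam2 - lam1) * (Omg (n + 1) : ℂ)) :
    ∀ n m : ℕ, m ≤ n →
      Jg (m + 1) * Jg n - Jg m * Jg (n + 1) =
        (1 / 49 : ℂ) *
          ((lam1 ^ 2 - lam1 * lam2 + lam2 ^ 2) * (Omg (n - m) : ℂ)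
            + lam * (1 + Complex.I / 2) * (2 ^ m * Psi n - 2 ^ n * Psi m)) := by
  set A : ℂ := lam * (1 + Complex.I / 2) / 7
  set u : ℕ → ℂ := omgComb (lam1 / 7) (lam2 / 7)
  have binet : ∀ n, Jg n = A * 2 ^ n + u n := by
    refine eq_of_jacobsthal_rec_of_eq_init hrec (fun n => ?_) ?_ ?_ ?_
    · linear_combination
        jacobsthal_rec_of_add_add_eq_zero (omgComb_add_add_eq_zero (lam1 / 7) (lam2 / 7)) n
    all_goals
      simp only [A, u, omgComb, h0, h1, h2, hlam, hlam1, hlam2]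
      norm_num [Omg]
      ring
  have psi : ∀ n, Psi n = 7 * (2 * u n - u (n + 1)) := by
    intro n
    simp only [hPsi, u, omgComb, add_assoc, Nat.reduceAdd]
    linear_combination lam2 * Omg_add_Omg_add_one_add_Omg_add_two (R := ℂ) n
  intro n m hmn
  change casoratian Jg m n = _
  rw [funext binet, casoratian_two_pow_add, casoratian_omgComb _ _ hmn, psi, psi]
  ring
end

section
/- (Cassini's identity) For every natural number n ≥ 1, Jg(n)² - Jg(n-1)·Jg(n+1) = (1/49)·[ λ₁² - λ₁·λ₂ + λ₂² + λ·(1 + i/2)·2^(n-1)·(Ψ(n) - 2·Ψ(n-1)) ], where λ = a+b+c, λ₁ = 4a+4b-3c + (2a-5b+2c)·i, λ₂ = 6a-b-c - (4a+4b-3c)·i, and Ψ(n) = (2λ₁+λ₂)·Ω(n) + (3λ₂-λ₁)·Ω(n+1). -/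
theorem Omg_add_two_add_Omg_add_one_add_Omg {R : Type*} [Ring R] (n : ℕ) :
    (Omg (n + 2) : R) + Omg (n + 1) + Omg n = 0 := by
  have : n % 3 = 0 ∨ n % 3 = 1 ∨ n % 3 = 2 := by omega
  rcases this with h | h | h <;> simp [Omg, Nat.add_mod, h]

section ThreeTermSum

variable {R : Type*} [CommRing R]

theorem eq_Omg_comb_of_add_add_eq_zero {s : ℕ → R}
    (hs : ∀ n, s (n + 2) + s (n + 1) + s n = 0) (n : ℕ) :
    s n = (s 0 + s 1) * Omg n + s 0 * Omg (n + 1) := by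
  suffices ∀ n, s n = (s 0 + s 1) * Omg n + s 0 * Omg (n + 1) ∧
      s (n + 1) = (s 0 + s 1) * Omg (n + 1) + s 0 * Omg (n + 2) from (this n).1
  intro n
  induction n with
  | zero => simp [Omg]
  | succ n ih =>
    refine ⟨ih.2, ?_⟩
    show s (n + 2) = (s 0 + s 1) * Omg (n + 2) + s 0 * Omg (n + 3)
    have hΩ (k : ℕ) := Omg_add_two_add_Omg_add_one_add_Omg (R := R) k
    linear_combination hs n - ih.1 - ih.2 - (s 0 + s 1) * hΩ n - s 0 * hΩ (n + 1)

theorem sq_sub_mul_eq_of_add_add_eq_zero {s : ℕ → R}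
    (hs : ∀ n, s (n + 2) + s (n + 1) + s n = 0) (n : ℕ) :
    s (n + 1) ^ 2 - s n * s (n + 2) = s 1 ^ 2 - s 0 * s 2 := by
  induction n with
  | zero => rfl
  | succ n ih =>
    show s (n + 2) ^ 2 - s (n + 1) * s (n + 3) = _
    linear_combination ih - s (n + 1) * hs (n + 1) + s (n + 2) * hs n

theorem add_add_eq_two_pow_mul {x : ℕ → R}
    (hrec : ∀ n, x (n + 3) = x (n + 2) + x (n + 1) + 2 * x n) (n : ℕ) :
    x (n + 2) + x (n + 1) + x n = 2 ^ n * (x 2 + x 1 + x 0) := by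
  induction n with
  | zero => simp
  | succ n ih =>
    show x (n + 3) + x (n + 2) + x (n + 1) = _
    linear_combination hrec n + 2 * ih

end ThreeTermSum

theorem cassini_generalized_gaussian_third_order_jacobsthal
    (a b c : ℝ) (Jg : ℕ → ℂ)
    (h0 : Jg 0 = (a : ℂ) + ((c - b - a) / 2 : ℝ) * Complex.I)
    (h1 : Jg 1 = (b : ℂ) + (a : ℝ) * Complex.I)
    (h2 : Jg 2 = (c : ℂ) + (b : ℝ) * Complex.I)
    (hrec : ∀ n : ℕ, Jg (n + 3) = Jg (n + 2) + Jg (n + 1) + 2 * Jg n)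
    (lam lam1 lam2 : ℂ) (Psi : ℕ → ℂ)
    (hlam : lam = (a : ℂ) + b + c)
    (hlam1 : lam1 = (4 * a + 4 * b - 3 * c : ℝ) + (2 * a - 5 * b + 2 * c : ℝ) * Complex.I)
    (hlam2 : lam2 = (6 * a - b - c : ℝ) - (4 * a + 4 * b - 3 * c : ℝ) * Complex.I)
    (hPsi : ∀ n : ℕ, Psi n = (2 * lam1 + lam2) * (Omg n : ℂ) + (3 * lam2 - lam1) * (Omg (n + 1) : ℂ)) :
    ∀ n : ℕ, 1 ≤ n →
      Jg n ^ 2 - Jg (n - 1) * Jg (n + 1) =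
        (1 / 49 : ℂ) *
          (lam1 ^ 2 - lam1 * lam2 + lam2 ^ 2
            + lam * (1 + Complex.I / 2) * 2 ^ (n - 1) * (Psi n - 2 * Psi (n - 1))) := by
  intro n hn
  obtain ⟨m, rfl⟩ : ∃ m, n = m + 1 := ⟨n - 1, by omega⟩
  set T := Jg 2 + Jg 1 + Jg 0 with hT_def
  set s : ℕ → ℂ := fun k ↦ 7 * Jg k - 2 ^ k * T with hs_def
  have hs : ∀ k, s (k + 2) + s (k + 1) + s k = 0 := fun k ↦ by
    linear_combination 7 * add_add_eq_two_pow_mul hrec k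
  have hJg (k : ℕ) : Jg k = (2 ^ k * T + s k) / 7 := by simp only [hs_def]; ring
  have hT : T = lam * (1 + Complex.I / 2) := by rw [hT_def, h0, h1, h2, hlam]; push_cast; ring
  have hs0 : s 0 = lam2 := by simp only [hs_def, hT, h0, hlam, hlam2]; push_cast; ring
  have hs1 : s 1 = lam1 - lam2 := by simp only [hs_def, hT, h1, hlam, hlam1, hlam2]; push_cast; ring
  have hs2 : s 2 = -lam1 := by linear_combination hs 0 - hs0 - hs1
  have hΨ (k : ℕ) : Psi k = 2 * s k - s (k + 1) := by
    have hs_Omg (k : ℕ) := eq_Omg_comb_of_add_add_eq_zero hs k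
    rw [hPsi, hs_Omg k, hs_Omg (k + 1), hs0, hs1]
    linear_combination lam2 * Omg_add_two_add_Omg_add_one_add_Omg (R := ℂ) k
  have hQ := sq_sub_mul_eq_of_add_add_eq_zero hs m
  rw [hs0, hs1, hs2] at hQ
  rw [Nat.add_sub_cancel, hΨ, hΨ, ← hT, hJg m, hJg (m + 1), hJg (m + 1 + 1)]
  linear_combination hQ / 49
end

section
/- In the ring of formal power series ℂ[[X]], the generating function of the generalized Gaussian third-order Jacobsthal numbers satisfies (1 - X - X² - 2X³) · (∑_{n≥0} Jg(n)·X^n) = a + (b-a)·X + (c-b-a)·X² + (1/2)·[ (c-b-a) + (3a+b-c)·X - (a-3b+c)·X² ]·i. -/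
open PowerSeries

/-- Coefficient `n + 3` of the product is `u (n + 3) - p u (n + 2) - q u (n + 1) - r u n = 0`,
so only the first three coefficients survive. -/
theorem mul_mk_eq_of_linear_recurrence_three {R : Type*} [CommRing R] (p q r : R) (u : ℕ → R)
    (hu : ∀ n, u (n + 3) = p * u (n + 2) + q * u (n + 1) + r * u n) :
    (1 - C p * X - C q * X ^ 2 - C r * X ^ 3) * mk u =
      C (u 0) + C (u 1 - p * u 0) * X + C (u 2 - p * u 1 - q * u 0) * X ^ 2 := by
  ext n
  rcases n with _ | _ | _ | n <;>
    simp [sub_mul, mul_assoc, coeff_X_pow_mul', coeff_succ_X_mul, coeff_X_pow, hu]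
  ring

theorem generating_function_generalized_gaussian_third_order_jacobsthal
    (a b c : ℝ) (Jg : ℕ → ℂ)
    (h0 : Jg 0 = (a : ℂ) + ((c - b - a) / 2 : ℝ) * Complex.I)
    (h1 : Jg 1 = (b : ℂ) + (a : ℝ) * Complex.I)
    (h2 : Jg 2 = (c : ℂ) + (b : ℝ) * Complex.I)
    (hrec : ∀ n : ℕ, Jg (n + 3) = Jg (n + 2) + Jg (n + 1) + 2 * Jg n) :
    (1 - X - X ^ 2 - 2 * X ^ 3 : ℂ⟦X⟧) * PowerSeries.mk Jg =
      C (a : ℂ) + C ((b : ℂ) - a) * X + C ((c : ℂ) - b - a) * X ^ 2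
        + C (1 / 2 : ℂ) *
            (C ((c : ℂ) - b - a) + C ((3 * a + b - c : ℝ) : ℂ) * X
              - C ((a - 3 * b + c : ℝ) : ℂ) * X ^ 2) * C Complex.I := by
  have hJg := mul_mk_eq_of_linear_recurrence_three 1 1 2 Jg (by simpa using hrec)
  simp only [map_one, map_ofNat, one_mul] at hJg
  calc (1 - X - X ^ 2 - 2 * X ^ 3 : ℂ⟦X⟧) * PowerSeries.mk Jg
      = C (Jg 0) + C (Jg 1 - Jg 0) * X + C (Jg 2 - Jg 1 - Jg 0) * X ^ 2 := hJg
    -- `ring` cannot invert `C 2` in `ℂ⟦X⟧`, so the halves are first isolated as `1 / 2` inside `C`.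
    _ = C (a + 1 / 2 * (c - b - a) * Complex.I)
          + C (b - a + 1 / 2 * ((3 * a + b - c : ℝ) : ℂ) * Complex.I) * X
          + C (c - b - a - 1 / 2 * ((a - 3 * b + c : ℝ) : ℂ) * Complex.I) * X ^ 2 := by
      rw [h0, h1, h2]; push_cast; ring_nf
    _ = _ := by simp only [map_add, map_sub, map_mul]; ring
end

section
/- In the ring of formal power series ℂ[[X]], the generating function of the Gaussian third-order Jacobsthal numbers satisfies (1 - X - X² - 2X³) · (∑_{n≥0} Jg(n)·X^n) = X + X²·i. -/
open PowerSeries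

theorem PowerSeries.mul_mk_eq_of_linearRecurrence_three {R : Type*} [CommRing R]
    (a : ℕ → R) (p q r : R)
    (hrec : ∀ n : ℕ, a (n + 3) = p * a (n + 2) + q * a (n + 1) + r * a n) :
    (1 - C p * X - C q * X ^ 2 - C r * X ^ 3) * mk a =
      C (a 0) + C (a 1 - p * a 0) * X + C (a 2 - p * a 1 - q * a 0) * X ^ 2 := by
  ext n
  rcases n with _ | _ | _ | n <;>
    simp [sub_mul, mul_assoc, coeff_X_pow_mul', coeff_X_pow, coeff_succ_X_mul]
  case succ.succ.succ => rw [hrec]; ring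

theorem generating_function_gaussian_third_order_jacobsthal
    (Jg : ℕ → ℂ)
    (h0 : Jg 0 = 0)
    (h1 : Jg 1 = 1)
    (h2 : Jg 2 = 1 + Complex.I)
    (hrec : ∀ n : ℕ, Jg (n + 3) = Jg (n + 2) + Jg (n + 1) + 2 * Jg n) :
    (1 - X - X ^ 2 - 2 * X ^ 3 : ℂ⟦X⟧) * PowerSeries.mk Jg =
      X + X ^ 2 * C Complex.I := by
  have key := mul_mk_eq_of_linearRecurrence_three Jg 1 1 2 (by simpa using hrec)
  simp only [map_one, one_mul, map_ofNat, h0, h1, h2] at key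
  rw [key]
  simp [mul_comm]
end

section
/- In the ring of formal power series ℂ[[X]], the generating function of the Gaussian modified third-order Jacobsthal numbers satisfies (1 - X - X² - 2X³) · (∑_{n≥0} Kg(n)·X^n) = 3 - 2X - X² - (1/2)·(1 - 7X + 3X²)·i. -/
open PowerSeries

theorem PowerSeries.mul_mk_eq_of_three_term_recurrence {R : Type*} [CommRing R]
    (a : ℕ → R) (c₀ c₁ c₂ : R)
    (hrec : ∀ n, a (n + 3) = c₂ * a (n + 2) + c₁ * a (n + 1) + c₀ * a n) :
    (1 - C c₂ * X - C c₁ * X ^ 2 - C c₀ * X ^ 3 : R⟦X⟧) * mk a =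
      C (a 0) + C (a 1 - c₂ * a 0) * X + C (a 2 - c₂ * a 1 - c₁ * a 0) * X ^ 2 := by
  ext n
  rcases n with _ | _ | _ | n
  · simp
  · simp [sub_mul, mul_assoc, coeff_X_pow_mul']
  · simp [sub_mul, mul_assoc, coeff_X_pow_mul', coeff_X_pow]
  · simp [sub_mul, mul_assoc, coeff_X_pow_mul', coeff_X_pow, hrec]
    ring

theorem generating_function_gaussian_modified_third_order_jacobsthal
    (Kg : ℕ → ℂ)
    (h0 : Kg 0 = 3 - (1 / 2 : ℂ) * Complex.I)
    (h1 : Kg 1 = 1 + 3 * Complex.I)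
    (h2 : Kg 2 = 3 + Complex.I)
    (hrec : ∀ n : ℕ, Kg (n + 3) = Kg (n + 2) + Kg (n + 1) + 2 * Kg n) :
    (1 - X - X ^ 2 - 2 * X ^ 3 : ℂ⟦X⟧) * PowerSeries.mk Kg =
      3 - 2 * X - X ^ 2 - C (1 / 2 : ℂ) * (1 - 7 * X + 3 * X ^ 2) * C Complex.I := by
  have hrec' : ∀ n, Kg (n + 3) = 1 * Kg (n + 2) + 1 * Kg (n + 1) + 2 * Kg n := by
    simpa only [one_mul] using hrec
  have key := mul_mk_eq_of_three_term_recurrence Kg 2 1 1 hrec'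
  -- Stated in the atom `(1 / 2) * i`, so that `ring` meets the same atoms `C (1 / 2)`, `C i`
  -- as on the right-hand side (`C` cannot be pushed through the division).
  have hc₁ : Kg 1 - 1 * Kg 0 = -2 + 7 * ((1 / 2 : ℂ) * Complex.I) := by
    rw [h0, h1]; ring
  have hc₂ : Kg 2 - 1 * Kg 1 - 1 * Kg 0 = -1 - 3 * ((1 / 2 : ℂ) * Complex.I) := by
    rw [h0, h1, h2]; ring
  rw [hc₁, hc₂, h0] at key
  simp only [map_sub, map_add, map_mul, map_neg, map_one, map_ofNat, one_mul] at key
  rw [key]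
  ring
end

section
/- For every natural number n ≥ 0, the partial sum of the generalized Gaussian third-order Jacobsthal numbers satisfies ∑_{l=0}^{n} Jg(l) = (1/3)·[ Jg(n+2) + 2·Jg(n) + (a-c) + ((c-3b-a)/2)·i ]. -/
open Finset

theorem three_nsmul_sum_range_succ_of_jacobsthal_rec {M : Type*} [AddCommGroup M] (x : ℕ → M)
    (hrec : ∀ n, x (n + 3) = x (n + 2) + x (n + 1) + 2 • x n) (n : ℕ) :
    3 • ∑ l ∈ range (n + 1), x l = x (n + 2) + 2 • x n + (x 0 - x 2) := by
  induction n with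
  | zero => simp only [zero_add, sum_range_one]; abel
  | succ n ih =>
    rw [sum_range_succ, smul_add, ih, show n + 1 + 2 = n + 3 from rfl, hrec n]
    abel

theorem partial_sum_generalized_gaussian_third_order_jacobsthal_general
    (a b c : ℝ) (Jg : ℕ → ℂ)
    (h0 : Jg 0 = (a : ℂ) + ((c - b - a) / 2 : ℝ) * Complex.I)
    (h2 : Jg 2 = (c : ℂ) + (b : ℝ) * Complex.I)
    (hrec : ∀ n : ℕ, Jg (n + 3) = Jg (n + 2) + Jg (n + 1) + 2 * Jg n) :
    ∀ n : ℕ,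
      ∑ l ∈ Finset.range (n + 1), Jg l =
        (1 / 3 : ℂ) * (Jg (n + 2) + 2 * Jg n + ((a : ℂ) - c)
          + ((c - 3 * b - a) / 2 : ℝ) * Complex.I) := by
  intro n
  have hsum := three_nsmul_sum_range_succ_of_jacobsthal_rec Jg
    (fun n => by rw [hrec, nsmul_eq_mul, Nat.cast_ofNat]) n
  have hinit : Jg 0 - Jg 2 = (a : ℂ) - c + ((c - 3 * b - a) / 2 : ℝ) * Complex.I := by
    rw [h0, h2]
    push_cast
    ring
  simp only [nsmul_eq_mul, Nat.cast_ofNat, hinit] at hsum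
  rw [add_assoc, ← hsum]
  ring

theorem partial_sum_generalized_gaussian_third_order_jacobsthal
    (a b c : ℝ) (Jg : ℕ → ℂ)
    (h0 : Jg 0 = (a : ℂ) + ((c - b - a) / 2 : ℝ) * Complex.I)
    (h1 : Jg 1 = (b : ℂ) + (a : ℝ) * Complex.I)
    (h2 : Jg 2 = (c : ℂ) + (b : ℝ) * Complex.I)
    (hrec : ∀ n : ℕ, Jg (n + 3) = Jg (n + 2) + Jg (n + 1) + 2 * Jg n) :
    ∀ n : ℕ,
      ∑ l ∈ Finset.range (n + 1), Jg l =
        (1 / 3 : ℂ) * (Jg (n + 2) + 2 * Jg n + ((a : ℂ) - c)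
          + ((c - 3 * b - a) / 2 : ℝ) * Complex.I) :=
  partial_sum_generalized_gaussian_third_order_jacobsthal_general a b c Jg h0 h2 hrec
end

section
/- For every natural number n ≥ 0, the partial sum of the Gaussian modified third-order Jacobsthal numbers satisfies ∑_{l=0}^{n} Kg(l) = (1/3)·[ Kg(n+2) + 2·Kg(n) - (3/2)·i ]. -/
open Finset

/- The recurrence makes `a (n + 2) + 2 * a n` grow by exactly `3 * a (n + 1)` at each step,
so three times a partial sum telescopes. -/
theorem three_mul_sum_range_succ_of_jacobsthal_rec {R : Type*} [CommRing R] (a : ℕ → R)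
    (hrec : ∀ n, a (n + 3) = a (n + 2) + a (n + 1) + 2 * a n) (n : ℕ) :
    3 * ∑ l ∈ range (n + 1), a l = a (n + 2) + 2 * a n + (a 0 - a 2) := by
  induction n with
  | zero => simp only [zero_add, sum_range_one]; ring
  | succ m ih =>
    rw [sum_range_succ, mul_add, ih, hrec m]
    ring

theorem partial_sum_gaussian_modified_third_order_jacobsthal_general
    (Kg : ℕ → ℂ)
    (h0 : Kg 0 = 3 - (1 / 2 : ℂ) * Complex.I)
    (h2 : Kg 2 = 3 + Complex.I)
    (hrec : ∀ n : ℕ, Kg (n + 3) = Kg (n + 2) + Kg (n + 1) + 2 * Kg n) :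
    ∀ n : ℕ,
      ∑ l ∈ Finset.range (n + 1), Kg l =
        (1 / 3 : ℂ) * (Kg (n + 2) + 2 * Kg n - (3 / 2 : ℂ) * Complex.I) := by
  intro n
  have h := three_mul_sum_range_succ_of_jacobsthal_rec Kg hrec n
  rw [h0, h2] at h
  linear_combination (1 / 3 : ℂ) * h

theorem partial_sum_gaussian_modified_third_order_jacobsthal
    (Kg : ℕ → ℂ)
    (h0 : Kg 0 = 3 - (1 / 2 : ℂ) * Complex.I)
    (h1 : Kg 1 = 1 + 3 * Complex.I)
    (h2 : Kg 2 = 3 + Complex.I)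
    (hrec : ∀ n : ℕ, Kg (n + 3) = Kg (n + 2) + Kg (n + 1) + 2 * Kg n) :
    ∀ n : ℕ,
      ∑ l ∈ Finset.range (n + 1), Kg l =
        (1 / 3 : ℂ) * (Kg (n + 2) + 2 * Kg n - (3 / 2 : ℂ) * Complex.I) :=
  partial_sum_gaussian_modified_third_order_jacobsthal_general Kg h0 h2 hrec
end
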